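/- For the multi-star graph G_mstar on n = qm vertices (q copies of the m-vertex star, q ≥ m), C(G_mstar, n, m+1) = ∅; hence the maximum distance of a QECC containing the multi-star graph state is exactly m. -/
import Mathlib


open Finset

/-- Hamming weight of a bitstring. -/
def wt {ι : Type*} [Fintype ι] (k : ι → ZMod 2) : ℕ :=
  (univ.filter fun i => k i ≠ 0).card

/-- Hamming weight of the bitwise OR of two bitstrings. -/
def wtOr {ι : Type*} [Fintype ι] (k l : ι → ZMod 2) : ℕ :=
  (univ.filter fun i => k i ≠ 0 ∨ l i ≠ 0).card

/-- `Z(G,n,d) = {k : wt(k ∨ (A·k)) ≤ d - 1}`. -/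
def Zset {ι : Type*} [Fintype ι] (A : Matrix ι ι (ZMod 2)) (d : ℕ) :
    Set (ι → ZMod 2) :=
  {k | wtOr k (A.mulVec k) ≤ d - 1}

/-- `Z^⊥(G,n,d) = {h : h·k = 0 for all k ∈ Z(G,n,d)}`. -/
def Zperp {ι : Type*} [Fintype ι] (A : Matrix ι ι (ZMod 2)) (d : ℕ) :
    Set (ι → ZMod 2) :=
  {h | ∀ k ∈ Zset A d, ∑ i, h i * k i = 0}

/-- `W(G,n,d) = {A·m + l : wt(m ∨ l) ≤ d - 1}`. -/
def Wset {ι : Type*} [Fintype ι] (A : Matrix ι ι (ZMod 2)) (d : ℕ) :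
    Set (ι → ZMod 2) :=
  {h | ∃ m l, wtOr m l ≤ d - 1 ∧ A.mulVec m + l = h}

/-- `C(G,n,d) = Z^⊥(G,n,d) \ W(G,n,d)`. -/
def Cset {ι : Type*} [Fintype ι] (A : Matrix ι ι (ZMod 2)) (d : ℕ) :
    Set (ι → ZMod 2) :=
  Zperp A d \ Wset A d

/-- Block-diagonal adjacency matrix of `q` disjoint copies of the star graph on
`m + 2` vertices: vertex `(i, j)` is vertex `j` of copy `i`, with `j = 0` the
center of each star. -/
def Amstar (q m : ℕ) :
    Matrix (Fin q × Fin (m + 2)) (Fin q × Fin (m + 2)) (ZMod 2) :=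
  fun p q' => if p.1 = q'.1 ∧ ((p.2 = 0 ∧ q'.2 ≠ 0) ∨ (q'.2 = 0 ∧ p.2 ≠ 0)) then 1 else 0

lemma amstar_ne_zero {q m : ℕ} {p p' : Fin q × Fin (m + 2)}
    (h : Amstar q m p p' ≠ 0) : p.1 = p'.1 := by
  by_contra hc
  exact h (by simp [Amstar, hc])

lemma mulVec_ne_zero {q m : ℕ} {k : Fin q × Fin (m + 2) → ZMod 2}
    {p : Fin q × Fin (m + 2)} (h : (Amstar q m).mulVec k p ≠ 0) :
    ∃ p', Amstar q m p p' ≠ 0 ∧ k p' ≠ 0 := by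
  by_contra hc
  push_neg at hc
  apply h
  show ∑ p', Amstar q m p p' * k p' = 0
  apply Finset.sum_eq_zero
  intro p' _
  by_cases h1 : Amstar q m p p' = 0
  · rw [h1, zero_mul]
  · rw [hc p' h1, mul_zero]

lemma block_card {q m : ℕ} (i : Fin q) :
    (({i} ×ˢ univ : Finset (Fin q × Fin (m + 2)))).card = m + 2 := by
  rw [Finset.card_product, Finset.card_singleton, Finset.card_univ,
    Fintype.card_fin, one_mul]

/-- For the multi-star graph on `n = q(m+2)` vertices (`q` copies of
the `(m+2)`-vertex star, `q ≥ m + 2`), `C(G_mstar, n, m+3) = ∅` while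
`C(G_mstar, n, m+2) ≠ ∅`; hence the maximum distance of a QECC containing the
multi-star graph state is exactly `m + 2`. -/
theorem stmt10 (q m : ℕ) (hq : m + 2 ≤ q) :
    Cset (Amstar q m) (m + 3) = ∅ ∧ (Cset (Amstar q m) (m + 2)).Nonempty := by
  constructor
  · -- C(A, m+3) = ∅
    ext h
    simp only [Set.mem_empty_iff_false, iff_false]
    rintro ⟨hZ, hW⟩
    apply hW
    have hzero : ∀ v, h v = 0 := by
      intro v
      have hmemZ : (fun p => if p = v then (1 : ZMod 2) else 0) ∈
          Zset (Amstar q m) (m + 3) := by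
        show wtOr _ _ ≤ m + 3 - 1
        unfold wtOr
        have hsub : (univ.filter fun p =>
            (if p = v then (1 : ZMod 2) else 0) ≠ 0 ∨
            (Amstar q m).mulVec (fun p => if p = v then (1 : ZMod 2) else 0) p ≠ 0)
            ⊆ ({v.1} ×ˢ univ : Finset (Fin q × Fin (m + 2))) := by
          intro p hp
          rw [Finset.mem_filter] at hp
          rw [Finset.mem_product, Finset.mem_singleton]
          refine ⟨?_, Finset.mem_univ _⟩
          rcases hp.2 with h1 | h2
          · have : p = v := by
              by_contra hc; exact h1 (if_neg hc)
            rw [this]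
          · obtain ⟨p', hA, hk⟩ := mulVec_ne_zero h2
            have hp'v : p' = v := by
              by_contra hc; exact hk (if_neg hc)
            rw [← hp'v]
            exact amstar_ne_zero hA
        calc (univ.filter _).card ≤ _ := Finset.card_le_card hsub
          _ = m + 2 := block_card v.1
          _ ≤ m + 3 - 1 := le_refl _
      have hsum := hZ _ hmemZ
      rw [← hsum]
      rw [show (∑ i, h i * if i = v then (1 : ZMod 2) else 0) =
          ∑ i, if i = v then h i else 0 from
        Finset.sum_congr rfl fun i _ => by split <;> simp]
      rw [Finset.sum_ite_eq' univ v h, if_pos (Finset.mem_univ v)]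
    refine ⟨0, 0, ?_, ?_⟩
    · simp [wtOr]
    · funext p
      simp [Matrix.mulVec_zero, hzero p]
  · -- C(A, m+2) ≠ ∅
    refine ⟨fun p => if p.2 = 0 then 1 else 0, ?_, ?_⟩
    · -- ∈ Zperp
      intro k hk
      have hk' : wtOr k ((Amstar q m).mulVec k) ≤ m + 1 := hk
      have claim : ∀ i : Fin q, k (i, 0) = 0 := by
        intro i
        by_contra hki
        have hsub : ({i} ×ˢ univ : Finset (Fin q × Fin (m + 2))) ⊆
            univ.filter (fun p => k p ≠ 0 ∨ (Amstar q m).mulVec k p ≠ 0) := by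
          intro p hp
          rw [Finset.mem_product, Finset.mem_singleton] at hp
          rw [Finset.mem_filter]
          refine ⟨Finset.mem_univ _, ?_⟩
          by_cases hp2 : p.2 = 0
          · left
            have : p = (i, 0) := Prod.ext hp.1 hp2
            rw [this]; exact hki
          · right
            have hAk : (Amstar q m).mulVec k p = k (i, 0) := by
              show ∑ p', Amstar q m p p' * k p' = k (i, 0)
              rw [show (∑ p', Amstar q m p p' * k p') =
                  ∑ p', if p' = (i, 0) then k p' else 0 from
                Finset.sum_congr rfl fun p' _ => by
                  by_cases hp' : p' = (i, 0)
                  · subst hp'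
                    rw [if_pos rfl]
                    have : Amstar q m p (i, 0) = 1 := by
                      simp [Amstar, hp.1, hp2]
                    rw [this, one_mul]
                  · rw [if_neg hp']
                    have : Amstar q m p p' = 0 := by
                      simp only [Amstar, ite_eq_right_iff]
                      rintro ⟨h1, (⟨ha, _⟩ | ⟨ha, _⟩)⟩
                      · exact absurd ha hp2
                      · exact absurd (Prod.ext (by rw [← h1, hp.1]) ha) hp'
                    rw [this, zero_mul]]
              rw [Finset.sum_ite_eq' univ (i, 0) k, if_pos (Finset.mem_univ _)]
            rw [hAk]; exact hki
        have hcard : m + 2 ≤ wtOr k ((Amstar q m).mulVec k) := by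
          unfold wtOr
          calc m + 2 = _ := (block_card i).symm
            _ ≤ _ := Finset.card_le_card hsub
        omega
      apply Finset.sum_eq_zero
      intro p _
      show (if p.2 = 0 then (1 : ZMod 2) else 0) * k p = 0
      by_cases hp2 : p.2 = 0
      · rw [if_pos hp2, one_mul]
        have : p = (p.1, 0) := Prod.ext rfl hp2
        rw [this]; exact claim p.1
      · rw [if_neg hp2, zero_mul]
    · -- ∉ Wset
      rintro ⟨m', l, hw, heq⟩
      have hw' : wtOr m' l ≤ m + 1 := hw
      have hwit : ∀ i : Fin q, ∃ p : Fin q × Fin (m + 2),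
          p.1 = i ∧ (m' p ≠ 0 ∨ l p ≠ 0) := by
        intro i
        have h1 : (Amstar q m).mulVec m' (i, 0) + l (i, 0) = 1 := by
          have := congrFun heq (i, 0)
          simpa using this
        by_cases hl : l (i, 0) = 0
        · rw [hl, add_zero] at h1
          obtain ⟨p', hA, hm⟩ := mulVec_ne_zero
            (p := (i, 0)) (by rw [h1]; exact one_ne_zero)
          exact ⟨p', (amstar_ne_zero hA).symm, Or.inl hm⟩
        · exact ⟨(i, 0), rfl, Or.inr hl⟩
      choose f hf1 hf2 using hwit
      have hinj : Set.InjOn f (univ : Finset (Fin q)) := by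
        intro a _ b _ hab
        rw [← hf1 a, ← hf1 b, hab]
      have hle : q ≤ wtOr m' l := by
        unfold wtOr
        calc q = (univ : Finset (Fin q)).card := by
              rw [Finset.card_univ, Fintype.card_fin]
          _ ≤ _ := Finset.card_le_card_of_injOn f
              (fun i _ => Finset.mem_filter.mpr ⟨Finset.mem_univ _, hf2 i⟩) hinj
      omega
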